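/- Let F : E ⥤ B be a functor with a right adjoint G, with unit η. For a morphism f : B ⟶ A in E, the commutative square with top f, left η_B, right η_A, and bottom G(F(f)) is a pullback square if and only if f is F-cartesian (i.e., for every g : C ⟶ A in E and b : F(C) ⟶ F(B) in B with F(g) = F(f) ≫ b, there is a unique u : C ⟶ B with F(u) = b and u ≫ f = g). -/

import Mathlib

/-! Under `F ⊣ G`, a cone `(g, c)` over the cospan `η_Y, G(F(f))` with vertex `Z`
is the same as a pair `(g, b)` with `b : F(Z) ⟶ F(X)` adjoint to `c` and `F(g) = b ≫ F(f)`, and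
`u : Z ⟶ X` lifts `c` through `η_X` exactly when `F(u) = b`. So the universal property of the
pullback and cartesianness are the same statement. -/

open CategoryTheory Limits

universe v₁ v₂ u₁ u₂

/-- A morphism `f : X ⟶ Y` of `E` is *cartesian* with respect to a functor `F : E ⥤ B` if
for every `g : Z ⟶ Y` in `E` and `b : F(Z) ⟶ F(X)` in `B` with `F(g) = b ≫ F(f)`, there is a
unique `u : Z ⟶ X` with `F(u) = b` and `u ≫ f = g`. -/
def IsCart {E : Type u₁} {B : Type u₂} [Category.{v₁} E] [Category.{v₂} B]
    (F : E ⥤ B) {X Y : E} (f : X ⟶ Y) : Prop :=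
  ∀ ⦃Z : E⦄ (g : Z ⟶ Y) (b : F.obj Z ⟶ F.obj X),
    F.map g = b ≫ F.map f → ∃! u : Z ⟶ X, F.map u = b ∧ u ≫ f = g

namespace CategoryTheory

theorem CommSq.isPullback_iff_existsUnique_lift {C : Type*} [Category C] {P X Y Z : C}
    {fst : P ⟶ X} {snd : P ⟶ Y} {f : X ⟶ Z} {g : Y ⟶ Z} (w : CommSq fst snd f g) :
    IsPullback fst snd f g ↔
      ∀ ⦃W : C⦄ (h : W ⟶ X) (k : W ⟶ Y), h ≫ f = k ≫ g →
        ∃! l : W ⟶ P, l ≫ fst = h ∧ l ≫ snd = k := by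
  refine ⟨fun hP W h k hw => ⟨hP.lift h k hw, ⟨hP.lift_fst .., hP.lift_snd ..⟩, ?_⟩,
    fun hlift => .of_isLimit' w (PullbackCone.IsLimit.mk w.w
      (fun s => (hlift s.fst s.snd s.condition).choose)
      (fun s => (hlift s.fst s.snd s.condition).choose_spec.1.1)
      (fun s => (hlift s.fst s.snd s.condition).choose_spec.1.2)
      (fun s m hm₁ hm₂ => (hlift s.fst s.snd s.condition).choose_spec.2 m ⟨hm₁, hm₂⟩))⟩
  rintro l ⟨hl₁, hl₂⟩
  exact hP.hom_ext (by rw [hl₁, hP.lift_fst]) (by rw [hl₂, hP.lift_snd])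

namespace Adjunction

variable {C : Type*} {D : Type*} [Category C] [Category D] {F : C ⥤ D} {G : D ⥤ C}
  (adj : F ⊣ G)

theorem comp_unit_app_eq_homEquiv_iff {Z X : C} (u : Z ⟶ X) (b : F.obj Z ⟶ F.obj X) :
    u ≫ adj.unit.app X = adj.homEquiv Z (F.obj X) b ↔ F.map u = b := by
  rw [← adj.homEquiv_id, ← adj.homEquiv_naturality_left, Category.comp_id,
    Equiv.apply_eq_iff_eq]

theorem comp_unit_app_eq_homEquiv_comp_iff {Z X Y : C} (f : X ⟶ Y) (g : Z ⟶ Y)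
    (b : F.obj Z ⟶ F.obj X) :
    g ≫ adj.unit.app Y = adj.homEquiv Z (F.obj X) b ≫ G.map (F.map f) ↔
      F.map g = b ≫ F.map f := by
  rw [← adj.homEquiv_id, adj.homEquiv_naturality_left_square_iff, Category.comp_id]

end Adjunction

end CategoryTheory

/-- Fact 2.2: given an adjunction `F ⊣ G` with unit `η`, the square with top `f : X ⟶ Y`,
left `η_X`, right `η_Y` and bottom `G(F(f))` is a pullback if and only if `f` is
`F`-cartesian. -/
theorem pullback_iff_cartesian {E : Type u₁} {B : Type u₂}
    [Category.{v₁} E] [Category.{v₂} B]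
    (F : E ⥤ B) (G : B ⥤ E) (adj : F ⊣ G) {X Y : E} (f : X ⟶ Y) :
    IsPullback f (adj.unit.app X) (adj.unit.app Y) (G.map (F.map f)) ↔ IsCart F f := by
  rw [CommSq.isPullback_iff_existsUnique_lift ⟨(adj.unit_naturality f).symm⟩, IsCart]
  refine forall_congr' fun Z => forall_congr' fun g =>
    (adj.homEquiv Z (F.obj X)).forall_congr_right.symm.trans (forall_congr' fun b => ?_)
  simp only [adj.comp_unit_app_eq_homEquiv_comp_iff, adj.comp_unit_app_eq_homEquiv_iff,
    and_comm]
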